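/- Let u : [0,1] → ℂ² be continuously differentiable with ‖u(t)‖ = 1 for all t, and let γ : [0,1] → ℝ be continuously differentiable. Define ψ(t) = (e^{−iγ(t)}·u(t), conj(u(t)))/√2 ∈ ℂ⁴. Then i·∫₀¹ ⟨ψ(t), ψ′(t)⟩ dt = (γ(1) − γ(0))/2, where ⟨·,·⟩ is the standard inner product on ℂ⁴ (conjugate-linear in the first argument). -/

import Mathlib

open Matrix

/-!
With `e = exp (-iγ)`, the product rule gives
`⟨(e u, ū), (e u, ū)'⟩ = ē e' ‖u‖² + |e|² ⟨u, u'⟩ + ⟨u', u⟩`.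
Here `|e| = 1`, `ē e' = -iγ'`, and `⟨u', u⟩ + ⟨u, u'⟩ = (‖u‖²)' = 0`, so after the factor `1/2`
from the normalization the Berry connection `⟨ψ, ψ'⟩` is `-iγ'/2` at every point of `[0, 1]`
(also at the endpoints, where the derivative of `‖u‖²` is still determined by its values on
`[0, 1]`). Integrating `-iγ'/2` gives the claim.
-/

section Calculus

variable {𝕜 : Type*} [NontriviallyNormedField 𝕜] {ι κ : Type*} {t : 𝕜}

theorem HasDerivAt.sumElim {F : Type*} [NormedAddCommGroup F] [NormedSpace 𝕜 F]
    {f : 𝕜 → ι → F} {g : 𝕜 → κ → F} {f' : ι → F} {g' : κ → F}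
    (hf : HasDerivAt f f' t) (hg : HasDerivAt g g' t) :
    HasDerivAt (fun s => Sum.elim (f s) (g s)) (Sum.elim f' g') t := by
  refine hasDerivAt_pi.2 fun i => ?_
  cases i with
  | inl i => exact hasDerivAt_pi.1 hf i
  | inr i => exact hasDerivAt_pi.1 hg i

theorem HasDerivAt.dotProduct [Fintype ι] {𝔸 : Type*} [NormedCommRing 𝔸] [NormedAlgebra 𝕜 𝔸]
    {f g : 𝕜 → ι → 𝔸} {f' g' : ι → 𝔸}
    (hf : HasDerivAt f f' t) (hg : HasDerivAt g g' t) :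
    HasDerivAt (fun s => f s ⬝ᵥ g s) (f' ⬝ᵥ g t + f t ⬝ᵥ g') t := by
  have := HasDerivAt.fun_sum (u := Finset.univ) fun i _ =>
    (hasDerivAt_pi.1 hf i).fun_mul (hasDerivAt_pi.1 hg i)
  rwa [Finset.sum_add_distrib] at this

end Calculus

theorem star_dotProduct_add_star_dotProduct_eq_zero {𝕜 ι : Type*} [RCLike 𝕜] [Fintype ι]
    {u : ℝ → ι → 𝕜} {u' : ι → 𝕜} {s : Set ℝ} {t : ℝ} {c : 𝕜}
    (hu : HasDerivAt u u' t) (hs : UniqueDiffWithinAt ℝ s t) (ht : t ∈ s)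
    (hc : ∀ x ∈ s, star (u x) ⬝ᵥ u x = c) :
    star u' ⬝ᵥ u t + star (u t) ⬝ᵥ u' = 0 :=
  hs.eq_deriv _ (hu.star.dotProduct hu).hasDerivWithinAt
    ((hasDerivWithinAt_const t s c).congr hc (hc t ht))

theorem star_sumElim_smul_dotProduct_sumElim {R ι : Type*} [CommRing R] [StarRing R] [Fintype ι]
    {e e' : R} {v v' : ι → R}
    (he : star e * e = 1) (hv : star v ⬝ᵥ v = 1) (hv' : star v' ⬝ᵥ v + star v ⬝ᵥ v' = 0) :
    star (Sum.elim (e • v) (star v)) ⬝ᵥ Sum.elim (e • v' + e' • v) (star v') = star e * e' := by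
  rw [Function.star_sumElim, sumElim_dotProduct_sumElim, star_star, dotProduct_comm v,
    star_smul, smul_dotProduct, dotProduct_add, dotProduct_smul, dotProduct_smul, hv]
  simp only [smul_eq_mul]
  linear_combination (star v ⬝ᵥ v') * he + hv'

theorem Complex.star_exp_ofReal_mul_I_mul_self (θ : ℝ) :
    star (Complex.exp (θ * Complex.I)) * Complex.exp (θ * Complex.I) = 1 := by
  rw [Complex.star_def, Complex.conj_mul', Complex.norm_exp_ofReal_mul_I, Complex.ofReal_one,
    one_pow]

noncomputable def chiralState {ι : Type*} (γ : ℝ → ℝ) (u : ℝ → ι → ℂ) (t : ℝ) : ι ⊕ ι → ℂ :=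
  ((Real.sqrt 2 : ℂ))⁻¹ • Sum.elim (Complex.exp (-(γ t : ℂ) * Complex.I) • u t) (star (u t))

section ChiralState

variable {ι : Type*} [Fintype ι] {γ : ℝ → ℝ} {u : ℝ → ι → ℂ} {γ' t : ℝ} {u' : ι → ℂ}

theorem hasDerivAt_chiralState (hγ : HasDerivAt γ γ' t) (hu : HasDerivAt u u' t) :
    HasDerivAt (chiralState γ u) (((Real.sqrt 2 : ℂ))⁻¹ •
      Sum.elim (Complex.exp (-(γ t : ℂ) * Complex.I) • u' +
        (Complex.exp (-(γ t : ℂ) * Complex.I) * (-(γ' : ℂ) * Complex.I)) • u t) (star u')) t := by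
  have hphase : HasDerivAt (fun s => Complex.exp (-(γ s : ℂ) * Complex.I))
      (Complex.exp (-(γ t : ℂ) * Complex.I) * (-(γ' : ℂ) * Complex.I)) t :=
    (hγ.ofReal_comp.neg.mul_const Complex.I).cexp
  exact ((hphase.smul hu).sumElim hu.star).const_smul ((Real.sqrt 2 : ℂ))⁻¹

theorem star_chiralState_dotProduct_deriv {s : Set ℝ} (hγ : HasDerivAt γ γ' t)
    (hu : HasDerivAt u u' t) (hs : UniqueDiffWithinAt ℝ s t) (ht : t ∈ s)
    (hnorm : ∀ x ∈ s, star (u x) ⬝ᵥ u x = 1) :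
    star (chiralState γ u t) ⬝ᵥ deriv (chiralState γ u) t = -(Complex.I / 2) * γ' := by
  have hphase := Complex.star_exp_ofReal_mul_I_mul_self (-γ t)
  push_cast at hphase
  have hnormalization : star ((Real.sqrt 2 : ℂ))⁻¹ * ((Real.sqrt 2 : ℂ))⁻¹ = 2⁻¹ := by
    rw [star_inv₀, Complex.star_def, Complex.conj_ofReal, ← mul_inv, ← Complex.ofReal_mul,
      Real.mul_self_sqrt zero_le_two, Complex.ofReal_ofNat]
  rw [(hasDerivAt_chiralState hγ hu).deriv, chiralState, star_smul, smul_dotProduct,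
    dotProduct_smul, star_sumElim_smul_dotProduct_sumElim hphase (hnorm t ht)
      (star_dotProduct_add_star_dotProduct_eq_zero hu hs ht hnorm), smul_eq_mul, smul_eq_mul,
    ← mul_assoc, hnormalization]
  linear_combination (2⁻¹ * (-(γ' : ℂ) * Complex.I)) * hphase

end ChiralState

/-- **Zak phase of a chiral Bloch band equals half the phase winding.**
If `u : [0,1] → ℂ²` is C¹ with `‖u(t)‖ = 1`, `γ : [0,1] → ℝ` is C¹, and
`ψ(t) = (e^{-iγ(t)} u(t), conj u(t))/√2 ∈ ℂ⁴`, then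
`i ∫₀¹ ⟨ψ(t), ψ'(t)⟩ dt = (γ(1) - γ(0))/2`. -/
theorem zak_phase_eq_half_phase_change
    (u : ℝ → Fin 2 → ℂ) (γ : ℝ → ℝ)
    (hu : ContDiff ℝ 1 u) (hγ : ContDiff ℝ 1 γ)
    (hnorm : ∀ t ∈ Set.Icc (0 : ℝ) 1, star (u t) ⬝ᵥ u t = 1)
    (ψ : ℝ → (Fin 2 ⊕ Fin 2 → ℂ))
    (hψ : ∀ t : ℝ, ψ t = ((Real.sqrt 2 : ℂ))⁻¹ •
      Sum.elim (fun i => Complex.exp (-(γ t : ℂ) * Complex.I) * u t i)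
        (fun i => star (u t i))) :
    Complex.I * ∫ t in (0 : ℝ)..1, star (ψ t) ⬝ᵥ deriv ψ t
      = (((γ 1 - γ 0) / 2 : ℝ) : ℂ) := by
  obtain rfl : ψ = chiralState γ u := funext hψ
  have hud := hu.differentiable one_ne_zero
  have hγd := hγ.differentiable one_ne_zero
  have hconnection : Set.EqOn (fun t => star (chiralState γ u t) ⬝ᵥ deriv (chiralState γ u) t)
      (fun t => -(Complex.I / 2) * deriv γ t) (Set.uIcc 0 1) := fun t ht => by
    rw [Set.uIcc_of_le zero_le_one] at ht
    exact star_chiralState_dotProduct_deriv (hγd t).hasDerivAt (hud t).hasDerivAt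
      (uniqueDiffOn_Icc zero_lt_one t ht) ht hnorm
  have hprimitive : ∀ t ∈ Set.uIcc (0 : ℝ) 1,
      HasDerivAt (fun s => -(Complex.I / 2) * γ s) (-(Complex.I / 2) * deriv γ t) t :=
    fun t _ => (hγd t).hasDerivAt.ofReal_comp.const_mul _
  rw [intervalIntegral.integral_congr hconnection, intervalIntegral.integral_eq_sub_of_hasDerivAt
    hprimitive ((continuous_const.mul (Complex.continuous_ofReal.comp
      (hγ.continuous_deriv le_rfl))).intervalIntegrable 0 1)]
  push_cast
  linear_combination (-((γ 1 : ℂ) - γ 0) / 2) * Complex.I_mul_I
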